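/- arXiv:2210.11458 — 2 statements merged into one kernel-verified Lean document; each statement's English description precedes it below -/
import Mathlib

section
/- Every good 3-binary rooted tree is a caterpillar. That is, if T is a rooted tree whose root has degree exactly 3, all other vertices have degree 1 or 3, and diam(T) ≥ ℓ(T) − 1 (where ℓ(T) is the number of non-root leaves), then T consists of a path (y_0 … y_s) together with one pendant edge attached at each internal vertex y_1,…,y_{s−1} of the path. -/
/-- Degree of a vertex, as the cardinality of its neighbour set. -/
noncomputable def tdeg {V : Type*} (T : SimpleGraph V) (v : V) : ℕ :=
  (T.neighborSet v).ncard

/-- The number of non-root leaves of a rooted tree. -/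
noncomputable def nonRootLeaves {V : Type*} (T : SimpleGraph V) (r : V) : ℕ :=
  ({v : V | v ≠ r ∧ tdeg T v = 1}).ncard

/-!
All degrees are 1 or 3, so in a tree the handshake lemma gives `ℓ = b + 2`, where `ℓ` counts the
leaves (all of them non-root) and `b` the vertices of degree 3; goodness then says `diam ≥ b + 1`.
On a diametral path `y₀ … y_d` the `d - 1` interior vertices have degree 3, hence they are all the
vertices of degree 3 and `d = b + 1`. Each interior `y_i` has a third neighbour `z_i` off the path,
necessarily a leaf, so the `z_i` are distinct; the path and the `z_i` account for
`2d = ℓ + b = |V|` vertices, which is all of them.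
-/

open Finset

namespace SimpleGraph

variable {V : Type*} {G : SimpleGraph V}

namespace Walk

variable {u v : V} {p : G.Walk u v}

lemma le_add_one_of_adj_getVert (hp : p.length = G.dist u v) {i j : ℕ} (hj : j ≤ p.length)
    (h : G.Adj (p.getVert i) (p.getVert j)) : j ≤ i + 1 := by
  have := G.dist_le (((p.take i).concat h).append (p.drop j))
  simp only [length_append, length_concat, take_length, drop_length] at this
  omega

lemma eq_getVert_pred_or_succ_of_adj (hp : p.length = G.dist u v) {i : ℕ} (hi : i ≤ p.length)
    {w : V} (hw : w ∈ p.support) (h : G.Adj (p.getVert i) w) :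
    w = p.getVert (i - 1) ∨ w = p.getVert (i + 1) := by
  obtain ⟨n, rfl, hn⟩ := mem_support_iff_exists_getVert.mp hw
  have h₁ := le_add_one_of_adj_getVert hp hn h
  have h₂ := le_add_one_of_adj_getVert hp hi h.symm
  have h₃ : n ≠ i := by rintro rfl; exact h.ne rfl
  rcases (by omega : n = i - 1 ∨ n = i + 1) with rfl | rfl <;> simp

lemma exists_adj_getVert_notMem_support [Fintype (G.neighborSet (p.getVert i))]
    (hp : p.length = G.dist u v) (hi : i ≤ p.length) (hdeg : 3 ≤ G.degree (p.getVert i)) :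
    ∃ w, G.Adj (p.getVert i) w ∧ w ∉ p.support := by
  classical
  by_contra! h
  have : G.neighborFinset (p.getVert i) ⊆ {p.getVert (i - 1), p.getVert (i + 1)} := fun w hw ↦ by
    rw [mem_neighborFinset] at hw
    simpa using eq_getVert_pred_or_succ_of_adj hp hi (h w hw) hw
  have := (card_le_card this).trans card_le_two
  rw [card_neighborFinset_eq_degree] at this
  omega

lemma two_le_degree_getVert [Fintype (G.neighborSet (p.getVert i))] (hp : p.IsPath)
    (h₀ : 0 < i) (hi : i < p.length) : 2 ≤ G.degree (p.getVert i) := by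
  classical
  have hne : p.getVert (i - 1) ≠ p.getVert (i + 1) := fun h ↦ by
    have := hp.getVert_injOn (by simp; omega) (by simp; omega) h
    omega
  have hsub : {p.getVert (i - 1), p.getVert (i + 1)} ⊆ G.neighborFinset (p.getVert i) := by
    intro w hw
    simp only [mem_insert, mem_singleton] at hw
    rcases hw with rfl | rfl
    · simpa [Nat.sub_add_cancel h₀] using (p.adj_getVert_succ (i := i - 1) (by omega)).symm
    · simpa using p.adj_getVert_succ hi
  simpa [card_pair hne] using card_le_card hsub

def IsLegFamily (p : G.Walk u v) (z : ℕ → V) : Prop :=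
  ∀ i, 0 < i → i < p.length → G.Adj (p.getVert i) (z i) ∧ z i ∉ p.support

lemma IsPath.card_image_getVert_Ioo [DecidableEq V] (hp : p.IsPath) :
    #((Ioo 0 p.length).image p.getVert) = p.length - 1 := by
  rw [card_image_of_injOn, Nat.card_Ioo, Nat.sub_zero]
  exact hp.getVert_injOn.mono fun i hi ↦ (mem_Ioo.mp hi).2.le

end Walk

lemma tdeg_eq_degree (v : V) [Fintype (G.neighborSet v)] : tdeg G v = G.degree v := by
  rw [tdeg, ← card_neighborSet_eq_degree, Set.ncard_eq_toFinset_card', Set.toFinset_card]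

variable [Fintype V] [DecidableRel G.Adj]

lemma nonRootLeaves_eq_card_filter_degree_eq_one {r : V} (hr : G.degree r ≠ 1) :
    nonRootLeaves G r = #{v | G.degree v = 1} := by
  rw [nonRootLeaves, ← Set.ncard_coe_finset]
  congr 1
  ext v
  simp only [tdeg_eq_degree, coe_filter, mem_univ, true_and, Set.mem_ofPred_eq,
    and_iff_right_iff_imp]
  rintro hv rfl
  exact hr hv

lemma card_degree_eq_three_eq_card_degree_ne_one
    (h13 : ∀ v, G.degree v = 1 ∨ G.degree v = 3) :
    #{v | G.degree v = 3} = #{v | G.degree v ≠ 1} :=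
  congrArg card <| filter_congr fun v _ ↦ by grind

lemma card_eq_card_filter_degree_eq_one_add_three
    (h13 : ∀ v, G.degree v = 1 ∨ G.degree v = 3) :
    Fintype.card V = #{v | G.degree v = 1} + #{v | G.degree v = 3} := by
  rw [card_degree_eq_three_eq_card_degree_ne_one h13, card_filter_add_card_filter_not,
    card_univ]

lemma IsTree.card_filter_degree_eq_one (hG : G.IsTree)
    (h13 : ∀ v, G.degree v = 1 ∨ G.degree v = 3) :
    #{v | G.degree v = 1} = #{v | G.degree v = 3} + 2 := by
  have hsum : ∑ v, G.degree v = #{v | G.degree v = 1} + 3 * #{v | G.degree v = 3} := by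
    have : ∀ v ∈ univ, G.degree v = if G.degree v = 1 then 1 else 3 := fun v _ ↦ by grind
    rw [sum_congr rfl this, sum_ite, sum_const, sum_const,
      card_degree_eq_three_eq_card_degree_ne_one h13]
    simp [mul_comm]
  have := G.sum_degrees_eq_twice_card_edges
  have := hG.card_edgeFinset
  have := card_eq_card_filter_degree_eq_one_add_three h13
  omega

variable {u v : V} {p : G.Walk u v}

lemma degree_getVert_eq_three (h13 : ∀ v, G.degree v = 1 ∨ G.degree v = 3) (hp : p.IsPath)
    {i : ℕ} (h₀ : 0 < i) (hi : i < p.length) : G.degree (p.getVert i) = 3 := by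
  have := p.two_le_degree_getVert hp h₀ hi
  grind

lemma Walk.exists_isLegFamily (h13 : ∀ v, G.degree v = 1 ∨ G.degree v = 3)
    (hp : p.length = G.dist u v) : ∃ z, p.IsLegFamily z := by
  have (i : ℕ) : ∃ w, 0 < i → i < p.length → G.Adj (p.getVert i) w ∧ w ∉ p.support := by
    by_cases hi : 0 < i ∧ i < p.length
    · have h3 := degree_getVert_eq_three h13 (p.isPath_of_length_eq_dist hp) hi.1 hi.2
      obtain ⟨w, hw⟩ := p.exists_adj_getVert_notMem_support hp hi.2.le h3.ge
      exact ⟨w, fun _ _ ↦ hw⟩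
    · exact ⟨u, fun h₀ hi' ↦ absurd ⟨h₀, hi'⟩ hi⟩
  choose z hz using this
  exact ⟨z, hz⟩

variable [DecidableEq V]

lemma filter_degree_eq_three_eq_image_getVert (h13 : ∀ v, G.degree v = 1 ∨ G.degree v = 3)
    (hp : p.IsPath) (hlen : #{v | G.degree v = 3} + 1 ≤ p.length) :
    ({v | G.degree v = 3} : Finset V) = (Ioo 0 p.length).image p.getVert := by
  have hsub : (Ioo 0 p.length).image p.getVert ⊆ ({v | G.degree v = 3} : Finset V) := by
    simp only [subset_iff, mem_image, mem_Ioo, mem_filter, mem_univ, true_and]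
    rintro _ ⟨i, ⟨h₀, hi⟩, rfl⟩
    exact degree_getVert_eq_three h13 hp h₀ hi
  exact (eq_of_subset_of_card_le hsub (by rw [hp.card_image_getVert_Ioo]; omega)).symm

lemma degree_eq_one_of_notMem_support (h13 : ∀ v, G.degree v = 1 ∨ G.degree v = 3)
    (hp : p.IsPath) (hlen : #{v | G.degree v = 3} + 1 ≤ p.length) {w : V}
    (hw : w ∉ p.support) : G.degree w = 1 := by
  refine (h13 w).resolve_right fun h3 ↦ hw ?_
  have : w ∈ ({v | G.degree v = 3} : Finset V) := by simpa using h3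
  rw [filter_degree_eq_three_eq_image_getVert h13 hp hlen, mem_image] at this
  obtain ⟨i, -, rfl⟩ := this
  exact p.getVert_mem_support i

variable {z : ℕ → V}

lemma Walk.IsLegFamily.injOn (h13 : ∀ v, G.degree v = 1 ∨ G.degree v = 3) (hp : p.IsPath)
    (hlen : #{v | G.degree v = 3} + 1 ≤ p.length)
    (hz : p.IsLegFamily z) :
    Set.InjOn z (Set.Ioo 0 p.length) := by
  rintro i ⟨hi₀, hi⟩ j ⟨hj₀, hj⟩ hij
  obtain ⟨hadj_i, -⟩ := hz i hi₀ hi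
  obtain ⟨hadj_j, hj_leaf⟩ := hz j hj₀ hj
  obtain ⟨x, -, hx⟩ := degree_eq_one_iff_existsUnique_adj.mp <|
    degree_eq_one_of_notMem_support h13 hp hlen hj_leaf
  rw [hij] at hadj_i
  refine hp.getVert_injOn (Set.mem_ofPred.mpr hi.le) (Set.mem_ofPred.mpr hj.le) ?_
  rw [hx _ hadj_i.symm, hx _ hadj_j.symm]

lemma IsTree.image_getVert_union_image_eq_univ (hG : G.IsTree)
    (h13 : ∀ v, G.degree v = 1 ∨ G.degree v = 3) (hp : p.IsPath)
    (hlen : #{v | G.degree v = 3} + 1 ≤ p.length)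
    (hz : p.IsLegFamily z) :
    (range (p.length + 1)).image p.getVert ∪ (Ioo 0 p.length).image z = univ := by
  have hdisj : Disjoint ((range (p.length + 1)).image p.getVert) ((Ioo 0 p.length).image z) := by
    rw [Finset.disjoint_left]
    intro w hy hz'
    obtain ⟨i, -, rfl⟩ := mem_image.mp hy
    obtain ⟨j, hj, hji⟩ := mem_image.mp hz'
    exact (hz j (mem_Ioo.mp hj).1 (mem_Ioo.mp hj).2).2 (hji ▸ p.getVert_mem_support i)
  have hy : #((range (p.length + 1)).image p.getVert) = p.length + 1 := by
    rw [card_image_of_injOn, card_range]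
    exact hp.getVert_injOn.mono fun i hi ↦ Nat.lt_succ_iff.mp (mem_range.mp hi)
  have hz : #((Ioo 0 p.length).image z) = p.length - 1 := by
    rw [card_image_of_injOn, Nat.card_Ioo, Nat.sub_zero]
    exact (hz.injOn h13 hp hlen).mono fun i hi ↦ by simpa using hi
  have hB := congrArg card (filter_degree_eq_three_eq_image_getVert h13 hp hlen)
  rw [hp.card_image_getVert_Ioo] at hB
  have := card_eq_card_filter_degree_eq_one_add_three h13
  have := hG.card_filter_degree_eq_one h13
  apply eq_univ_of_card
  rw [card_union_of_disjoint hdisj]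
  omega

end SimpleGraph

open SimpleGraph

/-- Every good 3-binary rooted tree (root of degree exactly 3, other
vertices of degree 1 or 3, diameter at least the number of non-root leaves minus 1) is a
caterpillar: it consists of a path `y_0 … y_s` together with one pendant vertex `z_i`
attached at each internal vertex `y_i`, `1 ≤ i ≤ s−1`. -/
theorem stmt6 {V : Type*} [Fintype V] (T : SimpleGraph V) (hT : T.IsTree) (r : V)
    (hroot : tdeg T r = 3)
    (hdeg : ∀ v : V, v ≠ r → tdeg T v = 1 ∨ tdeg T v = 3)
    (hgood : nonRootLeaves T r - 1 ≤ T.diam) :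
    ∃ (s : ℕ) (y z : ℕ → V),
      (∀ v : V, (∃ i ≤ s, v = y i) ∨ (∃ i, 1 ≤ i ∧ i ≤ s - 1 ∧ v = z i)) ∧
      (∀ i j, i ≤ s → j ≤ s → y i = y j → i = j) ∧
      (∀ i j, 1 ≤ i → i ≤ s - 1 → 1 ≤ j → j ≤ s - 1 → z i = z j → i = j) ∧
      (∀ i j, i ≤ s → 1 ≤ j → j ≤ s - 1 → y i ≠ z j) ∧
      (∀ i, i < s → T.Adj (y i) (y (i + 1))) ∧
      (∀ i, 1 ≤ i → i ≤ s - 1 → T.Adj (y i) (z i)) := by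
  classical
  simp only [tdeg_eq_degree] at hroot hdeg
  have h13 (v : V) : T.degree v = 1 ∨ T.degree v = 3 := by
    by_cases hv : v = r
    · exact .inr (hv ▸ hroot)
    · exact hdeg v hv
  have : Nonempty V := ⟨r⟩
  obtain ⟨u, v, huv⟩ := T.exists_dist_eq_diam
  obtain ⟨p, hpath, hp⟩ := hT.connected.exists_path_of_dist u v
  have hlen : #{v | T.degree v = 3} + 1 ≤ p.length := by
    rw [nonRootLeaves_eq_card_filter_degree_eq_one (by omega),
      hT.card_filter_degree_eq_one h13] at hgood
    omega
  obtain ⟨z, hz⟩ := p.exists_isLegFamily h13 hp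
  have hcover := hT.image_getVert_union_image_eq_univ h13 hpath hlen hz
  refine ⟨p.length, p.getVert, z, fun w ↦ ?_, fun i j hi hj ↦ (hpath.getVert_injOn hi hj ·),
    fun i j hi₀ hi hj₀ hj ↦ (hz.injOn h13 hpath hlen ⟨hi₀, by omega⟩ ⟨hj₀, by omega⟩ ·),
    fun i j _ hj₀ hj h ↦ (hz j hj₀ (by omega)).2 (h ▸ p.getVert_mem_support i),
    fun i hi ↦ p.adj_getVert_succ hi, fun i hi₀ hi ↦ (hz i hi₀ (by omega)).1⟩
  have hw := hcover ▸ mem_univ w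
  simp only [mem_union, mem_image, mem_range, mem_Ioo] at hw
  rcases hw with ⟨i, hi, rfl⟩ | ⟨i, ⟨hi₀, hi⟩, rfl⟩
  · exact .inl ⟨i, by omega, rfl⟩
  · exact .inr ⟨i, hi₀, by omega, rfl⟩
end

section
/- Let X_1, …, X_n be independent random variables with X_i taking values in a finite set A_i, let c > 0, and let f : A_1 × ⋯ × A_n → ℝ satisfy |f(x) − f(x')| ≤ c whenever x and x' differ in exactly one coordinate. Then for every m ≥ 0, Pr(f(X) − E[f(X)] ≥ m) ≤ 2·exp(−2m²/(c²·n)). -/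
/-!
Peel off the first coordinate. For fixed values `y` of the other coordinates, `a ↦ f (a, y)` has
range of width at most `c`, so by Hoeffding's lemma its deviation from its average `g y` over the
first coordinate is sub-Gaussian with variance proxy `c² / 4`; and `g` again has bounded
differences `c` in the remaining `n - 1` coordinates. Integrating the fibrewise bound on the
moment generating function against that of `g` shows, by induction, that `f - E f` is sub-Gaussian
with variance proxy `n c² / 4` under any product of probability measures, in particular under the
law of `X`. The Chernoff bound then gives `exp (-2 m² / (c² n))`.
-/

open MeasureTheory ProbabilityTheory Real
open scoped NNReal

def HasBoundedDifferences {ι : Type*} {A : ι → Type*} (f : (∀ i, A i) → ℝ) (c : ℝ) : Prop :=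
  ∀ (x x' : ∀ i, A i) (i : ι), (∀ j, j ≠ i → x j = x' j) → |f x - f x'| ≤ c

namespace HasBoundedDifferences

variable {n : ℕ} {A : Fin (n + 1) → Type*} {f : (∀ i, A i) → ℝ} {c : ℝ}

lemma cons_sub_cons_le (hf : HasBoundedDifferences f c) (y : ∀ i : Fin n, A i.succ)
    (a b : A 0) : f (Fin.cons a y) - f (Fin.cons b y) ≤ c := by
  refine (le_abs_self _).trans (hf _ _ 0 fun j hj ↦ ?_)
  obtain ⟨k, rfl⟩ := Fin.exists_succ_eq.2 hj
  simp

lemma integral_cons [MeasurableSpace (A 0)] [MeasurableSingletonClass (A 0)] [Finite (A 0)]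
    (hf : HasBoundedDifferences f c) (ν : Measure (A 0)) [IsProbabilityMeasure ν] :
    HasBoundedDifferences (fun y : ∀ i : Fin n, A i.succ ↦ ∫ a, f (Fin.cons a y) ∂ν) c := by
  intro y y' i hyy'
  have hdiff : ∀ a, ‖f (Fin.cons a y) - f (Fin.cons a y')‖ ≤ c := fun a ↦
    hf (Fin.cons a y) (Fin.cons a y') i.succ fun j hj ↦ by
      cases j using Fin.cases with
      | zero => rfl
      | succ k => exact hyy' k (by rintro rfl; exact hj rfl)
  rw [← Real.norm_eq_abs, ← integral_sub .of_finite .of_finite]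
  simpa using norm_integral_le_of_norm_le_const (ae_of_all ν hdiff)

end HasBoundedDifferences

theorem measurePreserving_fin_zero_tail {n : ℕ} {A : Fin (n + 1) → Type*}
    [∀ i, MeasurableSpace (A i)] (ν : ∀ i, Measure (A i)) [∀ i, SigmaFinite (ν i)] :
    MeasurePreserving (fun x ↦ (x 0, Fin.tail x)) (Measure.pi ν)
      ((ν 0).prod (Measure.pi fun i ↦ ν i.succ)) :=
  measurePreserving_piFinSuccAbove ν 0

namespace ProbabilityTheory

lemma HasSubgaussianMGF.prod_of_forall_sub {α β : Type*} [MeasurableSpace α]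
    [MeasurableSpace β] {ν₀ : Measure α} {ν : Measure β} [SFinite ν₀] [SFinite ν]
    {X : α × β → ℝ} {Y : β → ℝ} {c₀ c : ℝ≥0}
    (hX : ∀ t, Integrable (fun p ↦ exp (t * X p)) (ν₀.prod ν))
    (hXY : ∀ y, HasSubgaussianMGF (fun a ↦ X (a, y) - Y y) c₀ ν₀)
    (hY : HasSubgaussianMGF Y c ν) :
    HasSubgaussianMGF X (c₀ + c) (ν₀.prod ν) where
  integrable_exp_mul := hX
  mgf_le t := calc
    mgf X (ν₀.prod ν) t
      = ∫ y, exp (t * Y y) * mgf (fun a ↦ X (a, y) - Y y) ν₀ t ∂ν := by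
        rw [mgf, integral_prod_symm _ (hX t)]
        congr 1 with y
        rw [mgf, ← integral_const_mul]
        congr 1 with a
        rw [← exp_add]
        ring_nf
    _ ≤ ∫ y, exp (t * Y y) * exp (c₀ * t ^ 2 / 2) ∂ν := by
        refine integral_mono_of_nonneg (ae_of_all _ fun y ↦ ?_)
          ((hY.integrable_exp_mul t).mul_const _) (ae_of_all _ fun y ↦ ?_)
        · exact mul_nonneg (exp_nonneg _) mgf_nonneg
        · exact mul_le_mul_of_nonneg_left ((hXY y).mgf_le t) (exp_nonneg _)
    _ ≤ exp (c * t ^ 2 / 2) * exp (c₀ * t ^ 2 / 2) := by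
        rw [integral_mul_const]
        exact mul_le_mul_of_nonneg_right (hY.mgf_le t) (exp_nonneg _)
    _ = exp ((c₀ + c : ℝ≥0) * t ^ 2 / 2) := by
        rw [← exp_add]
        push_cast
        ring_nf

lemma hasSubgaussianMGF_sub_integral_of_sub_le {α : Type*} [MeasurableSpace α]
    [MeasurableSingletonClass α] [Finite α] (ν : Measure α) [IsProbabilityMeasure ν]
    {g : α → ℝ} {c : ℝ≥0} (hg : ∀ a b, g a - g b ≤ c) :
    HasSubgaussianMGF (fun a ↦ g a - ∫ b, g b ∂ν) ((c / 2) ^ 2) ν := by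
  have := nonempty_of_isProbabilityMeasure ν
  obtain ⟨a₀, ha₀⟩ := Finite.exists_min g
  have hIcc : ∀ a, g a ∈ Set.Icc (g a₀) (g a₀ + c) := fun a ↦
    ⟨ha₀ a, by linarith [hg a a₀]⟩
  simpa using hasSubgaussianMGF_of_mem_Icc (measurable_of_finite g).aemeasurable
    (ae_of_all ν hIcc)

end ProbabilityTheory

theorem HasBoundedDifferences.hasSubgaussianMGF_pi : ∀ {n : ℕ} {A : Fin n → Type*}
    [∀ i, Finite (A i)] [∀ i, MeasurableSpace (A i)] [∀ i, MeasurableSingletonClass (A i)]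
    (ν : ∀ i, Measure (A i)) [∀ i, IsProbabilityMeasure (ν i)] {f : (∀ i, A i) → ℝ} {c : ℝ≥0},
    HasBoundedDifferences f c →
    HasSubgaussianMGF (fun x ↦ f x - ∫ y, f y ∂Measure.pi ν) (n * (c / 2) ^ 2) (Measure.pi ν)
  | 0, A, _, _, _, ν, _, f, c, _ => by
    have hconst : (fun x ↦ f x - ∫ y, f y ∂Measure.pi ν) = fun _ ↦ 0 := by
      funext x
      simp [Subsingleton.elim _ x]
    rw [hconst, Nat.cast_zero, zero_mul]
    exact .fun_zero
  | n + 1, A, _, _, _, ν, _, f, c, hf => by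
    set g : (∀ i : Fin n, A i.succ) → ℝ := fun y ↦ ∫ a, f (Fin.cons a y) ∂ν 0
    have he := measurePreserving_fin_zero_tail ν
    have hE : ∫ x, f x ∂Measure.pi ν = ∫ y, g y ∂Measure.pi fun i ↦ ν i.succ := by
      rw [← integral_prod_symm (fun p ↦ f (Fin.cons p.1 p.2)) .of_finite, ← he.map_eq,
        integral_map he.aemeasurable (measurable_of_finite _).aestronglyMeasurable]
      simp only [Fin.cons_self_tail]
    have hfiber : ∀ y, HasSubgaussianMGF (fun a ↦ (f (Fin.cons a y) - ∫ x, f x ∂Measure.pi ν) -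
        (g y - ∫ y, g y ∂Measure.pi fun i ↦ ν i.succ)) ((c / 2) ^ 2) (ν 0) := fun y ↦ by
      simpa [hE, g] using hasSubgaussianMGF_sub_integral_of_sub_le (ν 0) (hf.cons_sub_cons_le y)
    have hprod := HasSubgaussianMGF.prod_of_forall_sub
      (X := fun p ↦ f (Fin.cons p.1 p.2) - ∫ x, f x ∂Measure.pi ν) (fun _ ↦ .of_finite) hfiber
      (hasSubgaussianMGF_pi (fun i ↦ ν i.succ) (hf.integral_cons (ν 0)))
    rw [← he.map_eq] at hprod
    convert hprod.of_map he.aemeasurable using 1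
    · simp only [Function.comp_def, Fin.cons_self_tail]
    · push_cast
      ring

/-- **McDiarmid's inequality.** Let `X 0, …, X (n−1)` be independent random
variables, `X i` taking values in a finite set `A i`, and let `f` satisfy the bounded
differences condition with constant `c > 0`. Then for every `m ≥ 0`,
`Pr(f(X) − E[f(X)] ≥ m) ≤ 2·exp(−2m²/(c²n))`. -/
theorem stmt18 {Ω : Type*} [MeasurableSpace Ω] (μ : Measure Ω) [IsProbabilityMeasure μ]
    {n : ℕ} {A : Fin n → Type*} [∀ i, Fintype (A i)]
    [∀ i, MeasurableSpace (A i)] [∀ i, MeasurableSingletonClass (A i)]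
    (X : ∀ i : Fin n, Ω → A i) (hX : ∀ i, Measurable (X i))
    (hindep : iIndepFun X μ)
    (f : (∀ i, A i) → ℝ) (c : ℝ) (hc : 0 < c)
    (hf : ∀ (x x' : ∀ i, A i) (i : Fin n), (∀ j, j ≠ i → x j = x' j) →
      |f x - f x'| ≤ c)
    (m : ℝ) (hm : 0 ≤ m) :
    (μ {ω : Ω | m ≤ f (fun i => X i ω) - μ[fun ω => f (fun i => X i ω)]}).toReal ≤
      2 * Real.exp (-2 * m ^ 2 / (c ^ 2 * n)) := by
  lift c to ℝ≥0 using hc.le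
  have hY : Measurable fun ω i ↦ X i ω := measurable_pi_lambda _ hX
  have : ∀ i, IsProbabilityMeasure (μ.map (X i)) := fun i ↦
    Measure.isProbabilityMeasure_map (hX i).aemeasurable
  have hsub := HasBoundedDifferences.hasSubgaussianMGF_pi (fun i ↦ μ.map (X i)) hf
  rw [← hindep.map_fun_eq_pi_map fun i ↦ (hX i).aemeasurable,
    integral_map hY.aemeasurable (measurable_of_finite f).aestronglyMeasurable] at hsub
  calc (μ {ω | m ≤ f (fun i ↦ X i ω) - μ[fun ω ↦ f (fun i ↦ X i ω)]}).toReal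
      ≤ exp (-m ^ 2 / (2 * ((n * (c / 2) ^ 2 : ℝ≥0) : ℝ))) :=
        (hsub.of_map hY.aemeasurable).measure_ge_le hm
    _ = exp (-2 * m ^ 2 / (c ^ 2 * n)) := by
        rw [show 2 * ((n * (c / 2) ^ 2 : ℝ≥0) : ℝ) = c ^ 2 * n / 2 by push_cast; ring,
          div_div_eq_mul_div]
        ring_nf
    _ ≤ 2 * exp (-2 * m ^ 2 / (c ^ 2 * n)) := by linarith [exp_pos (-2 * m ^ 2 / (c ^ 2 * n))]
end
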